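/- Fix κ > 0, ℓ > 0, ℓ₃ ∈ (0,2π) and A ∈ ℝ. Then lim_{ℓ₁→∞} 2·e^{−κℓ₁}·c(ℓ₁) = f(ℓ,ℓ₃,A;κ), where c(ℓ₁) is the ℓ₁-dependent right-hand side of the negative-energy spectral condition and f(ℓ,ℓ₃,A;κ) = 4(κ²ℓ²−1)·(cos(2Aπ) − sinh(2κπ)) + (κ⁴ℓ⁴ − 2κ²ℓ² + 5)·cosh(2κπ) + 8κℓ·sin(2Aπ) − (κ²ℓ²+1)²·cosh(2κ(π−ℓ₃)); consequently, in the limit ℓ₁ → ∞ the negative spectral bands shrink to the points determined by the equation f(ℓ,ℓ₃,A;κ) = 0. -/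
import Mathlib


open Real Filter

/-- The `ℓ₁`-dependent right-hand side `c` of the negative-energy Floquet spectral
condition of the periodic magnetic ring chain at energy `−κ²`, with vertex coupling
parameter `ℓ`, ring-arc lengths `2π - ℓ₃` and `ℓ₃`, and magnetic potential `A`. -/
noncomputable def chainNegC (ℓ ℓ₃ A κ ℓ₁ : ℝ) : ℝ :=
  (4 * (κ ^ 2 * ℓ ^ 2 - 1) * Real.cos (2 * A * π)
      + (κ ^ 4 * ℓ ^ 4 + 3) * (Real.cosh (2 * κ * π) - Real.cosh (2 * κ * (π - ℓ₃))))
      * Real.sinh (κ * ℓ₁)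
    + 2 * (4 * κ * ℓ * Real.sin (2 * A * π)
      - (κ ^ 2 * ℓ ^ 2 - 1) * (Real.sinh (2 * κ * (π - ℓ₃)) + Real.sinh (2 * κ * π)))
      * Real.cosh (κ * ℓ₁)
    - 4 * (κ ^ 2 * ℓ ^ 2 - 1) * Real.cosh (κ * (2 * π - ℓ₃)) * Real.sinh (κ * (ℓ₁ + ℓ₃))

/-- The limiting function `f(ℓ, ℓ₃, A; κ)` whose zeros determine the points to which
the negative spectral bands shrink in the limit `ℓ₁ → ∞`. -/
noncomputable def chainNegF (ℓ ℓ₃ A κ : ℝ) : ℝ :=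
  4 * (κ ^ 2 * ℓ ^ 2 - 1) * (Real.cos (2 * A * π) - Real.sinh (2 * κ * π))
    + (κ ^ 4 * ℓ ^ 4 - 2 * κ ^ 2 * ℓ ^ 2 + 5) * Real.cosh (2 * κ * π)
    + 8 * κ * ℓ * Real.sin (2 * A * π)
    - (κ ^ 2 * ℓ ^ 2 + 1) ^ 2 * Real.cosh (2 * κ * (π - ℓ₃))

theorem stmt_19 (κ : ℝ) (hκ : 0 < κ) (ℓ : ℝ) (hℓ : 0 < ℓ)
    (ℓ₃ : ℝ) (hℓ₃ : ℓ₃ ∈ Set.Ioo 0 (2 * π)) (A : ℝ) :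
    Tendsto (fun ℓ₁ : ℝ => 2 * Real.exp (-κ * ℓ₁) * chainNegC ℓ ℓ₃ A κ ℓ₁)
      atTop (nhds (chainNegF ℓ ℓ₃ A κ)) := by
  set E : ℝ :=
    -(4 * (κ ^ 2 * ℓ ^ 2 - 1) * Real.cos (2 * A * π)
        + (κ ^ 4 * ℓ ^ 4 + 3) * (Real.cosh (2 * κ * π) - Real.cosh (2 * κ * (π - ℓ₃))))
      + 2 * (4 * κ * ℓ * Real.sin (2 * A * π)
        - (κ ^ 2 * ℓ ^ 2 - 1) * (Real.sinh (2 * κ * (π - ℓ₃)) + Real.sinh (2 * κ * π)))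
      + 4 * (κ ^ 2 * ℓ ^ 2 - 1) * Real.cosh (κ * (2 * π - ℓ₃)) * Real.exp (-(κ * ℓ₃))
    with hEdef
  have hE : ∀ x : ℝ, 2 * Real.exp (-κ * x) * chainNegC ℓ ℓ₃ A κ x
      = chainNegF ℓ ℓ₃ A κ + E * Real.exp (-(2 * κ) * x) := by
    intro x
    have hp := Real.exp_ne_zero (κ * π)
    have hq := Real.exp_ne_zero (κ * ℓ₃)
    have hu := Real.exp_ne_zero (κ * x)
    have e1 : Real.exp (2 * κ * π) = Real.exp (κ * π) * Real.exp (κ * π) := by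
      rw [← Real.exp_add]; ring_nf
    have e2 : Real.exp (2 * κ * (π - ℓ₃))
        = Real.exp (κ * π) * Real.exp (κ * π) / (Real.exp (κ * ℓ₃) * Real.exp (κ * ℓ₃)) := by
      rw [← Real.exp_add, ← Real.exp_add, ← Real.exp_sub]; ring_nf
    have e3 : Real.exp (κ * (2 * π - ℓ₃))
        = Real.exp (κ * π) * Real.exp (κ * π) / Real.exp (κ * ℓ₃) := by
      rw [← Real.exp_add, ← Real.exp_sub]; ring_nf
    have e4 : Real.exp (κ * (x + ℓ₃)) = Real.exp (κ * x) * Real.exp (κ * ℓ₃) := by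
      rw [← Real.exp_add]; ring_nf
    have e5 : Real.exp (-(2 * κ) * x) = (Real.exp (κ * x) * Real.exp (κ * x))⁻¹ := by
      rw [← Real.exp_add, ← Real.exp_neg]; ring_nf
    have e6 : Real.exp (-κ * x) = (Real.exp (κ * x))⁻¹ := by
      rw [← Real.exp_neg]; ring_nf
    simp only [chainNegC, chainNegF, hEdef, Real.cosh_eq, Real.sinh_eq, Real.exp_neg,
      e1, e2, e3, e4, e5, e6]
    field_simp
    ring
  have h1 : Tendsto (fun x : ℝ => -(2 * κ) * x) atTop atBot := by
    have h2 : Tendsto (fun x : ℝ => (2 * κ) * x) atTop atTop :=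
      tendsto_id.const_mul_atTop (by linarith)
    exact (tendsto_neg_atTop_atBot.comp h2).congr (fun x => by simp [Function.comp, neg_mul])
  have h3 : Tendsto (fun x : ℝ => Real.exp (-(2 * κ) * x)) atTop (nhds 0) :=
    Real.tendsto_exp_atBot.comp h1
  have h4 : Tendsto (fun x : ℝ => chainNegF ℓ ℓ₃ A κ + E * Real.exp (-(2 * κ) * x))
      atTop (nhds (chainNegF ℓ ℓ₃ A κ + E * 0)) :=
    tendsto_const_nhds.add (h3.const_mul E)
  simpa using h4.congr (fun x => (hE x).symm)
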